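/- Let R = ℂ[x,y] and m = (x,y). Fix integers d ≥ 1 and 1 ≤ j ≤ d−1. Let I be the ideal generated by m^{d+1} and the polynomials f_i = x^{d−i} y^{i} + Σ_{i'=d−j+1}^{d} c_{i,i'} x^{d−i'} y^{i'} for 0 ≤ i ≤ d−j, with arbitrary coefficients c_{i,i'} ∈ ℂ. Then for every choice of complex numbers a_0, …, a_{d−j−1} there exist unique complex numbers b_{i,i'} (for 0 ≤ i ≤ d−j−1 and d−j+1 ≤ i' ≤ d), namely b_{i,i'} = c_{i,i'} + a_i · c_{d−j,i'}, such that the ideal I' generated by m^{d+1} together with the polynomials g_i = x^{d−i} y^{i} + a_i x^{j} y^{d−j} + Σ_{i'=d−j+1}^{d} b_{i,i'} x^{d−i'} y^{i'} for 0 ≤ i ≤ d−j−1 is contained in I; moreover dim_ℂ(I/I') = 1. -/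

import Mathlib

/-!
Everything happens in degree `d` modulo `𝔪^(d+1)`: since `(r - r(0)) g ∈ 𝔪^(d+1)` for a form
`g` of degree `d`, the degree-`d` part of an ideal `𝔪^(d+1) + (S)`, with `S` consisting of
`d`-forms, is just the `ℂ`-span of `S`. The generators are in echelon form with respect to the
monomials `x^(d-k) y^k`, `k ≤ d - j`, so an element of their span is determined by those
coefficients. Hence `g_i ∈ I` forces `g_i = f_i + a_i f_(d-j)`, which pins down the `b`'s, and
`I = I' + ℂ f_(d-j)` with `f_(d-j) ∉ I'` gives `dim I/I' = 1`.
-/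

open MvPolynomial Finset

section Biorthogonal

variable {R M ι : Type*} [CommSemiring R] [AddCommMonoid M] [Module R M] [DecidableEq ι]
  {s : Finset ι} {v : ι → M} {φ : ι → M →ₗ[R] R}

theorem eq_sum_smul_of_mem_span_of_biorthogonal
    (hφ : ∀ k ∈ s, ∀ m ∈ s, φ k (v m) = if k = m then 1 else 0) {x : M}
    (hx : x ∈ Submodule.span R (v '' s)) : x = ∑ k ∈ s, φ k x • v k := by
  obtain ⟨c, rfl⟩ := (Submodule.mem_span_image_finset_iff_exists_fun' R).mp hx
  refine Finset.sum_congr rfl fun k hk => ?_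
  have hck : φ k (∑ m ∈ s, c m • v m) = c k := by
    simp only [map_sum, map_smul, smul_eq_mul]
    rw [Finset.sum_congr rfl fun m hm => by rw [hφ k hk m hm], Finset.sum_eq_single_of_mem k hk]
    · simp
    · intro m _ hmk
      simp [Ne.symm hmk]
  rw [hck]

theorem eq_zero_of_mem_span_of_biorthogonal
    (hφ : ∀ k ∈ s, ∀ m ∈ s, φ k (v m) = if k = m then 1 else 0) {x : M}
    (hx : x ∈ Submodule.span R (v '' s)) (hx0 : ∀ k ∈ s, φ k x = 0) : x = 0 := by
  rw [eq_sum_smul_of_mem_span_of_biorthogonal hφ hx]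
  exact Finset.sum_eq_zero fun k hk => by rw [hx0 k hk, zero_smul]

end Biorthogonal

theorem finrank_quotient_comap_subtype_eq_one {K A : Type*} [Field K] [CommRing A] [Algebra K A]
    {J J' : Ideal A} {v : A} (hv : v ∈ J) (hv' : v ∉ J')
    (h : ∀ p ∈ J, ∃ z : K, p - z • v ∈ J') :
    Module.finrank K (J ⧸ Submodule.comap J.subtype J') = 1 := by
  rw [finrank_eq_one_iff']
  refine ⟨Submodule.Quotient.mk ⟨v, hv⟩, ?_, ?_⟩
  · rwa [Ne, Submodule.Quotient.mk_eq_zero]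
  · intro w
    obtain ⟨⟨p, hp⟩, rfl⟩ := Submodule.Quotient.mk_surjective _ w
    obtain ⟨z, hz⟩ := h p hp
    refine ⟨z, ?_⟩
    rw [← Submodule.Quotient.mk_smul, Submodule.Quotient.eq, Submodule.mem_comap]
    simpa using J'.neg_mem hz

namespace MvPolynomial

variable {σ R : Type*} [CommRing R] {n : ℕ}

theorem sub_C_constantCoeff_mem_idealOfVars (r : MvPolynomial σ R) :
    r - C (constantCoeff r) ∈ idealOfVars σ R := by
  rw [← pow_one (idealOfVars σ R), mem_pow_idealOfVars_iff']
  intro x hx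
  obtain rfl : x = 0 := (Finsupp.degree_eq_zero_iff x).mp (Nat.lt_one_iff.mp hx)
  simp [constantCoeff_eq]

theorem IsHomogeneous.mem_pow_idealOfVars {p : MvPolynomial σ R} (hp : p.IsHomogeneous n) :
    p ∈ idealOfVars σ R ^ n :=
  (mem_pow_idealOfVars_iff n p).2 fun x hx => by
    rw [Finsupp.degree_eq_weight_one, ← Pi.one_def, hp (mem_support_iff.mp hx)]

theorem sub_C_constantCoeff_mul_mem_pow_succ {g : MvPolynomial σ R}
    (hg : g ∈ idealOfVars σ R ^ n) (r : MvPolynomial σ R) :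
    (r - C (constantCoeff r)) * g ∈ idealOfVars σ R ^ (n + 1) := by
  rw [pow_succ']
  exact Ideal.mul_mem_mul (sub_C_constantCoeff_mem_idealOfVars r) hg

theorem homogeneousComponent_eq_zero_of_mem_pow_succ {p : MvPolynomial σ R}
    (hp : p ∈ idealOfVars σ R ^ (n + 1)) : homogeneousComponent n p = 0 := by
  ext x
  rw [coeff_homogeneousComponent, coeff_zero]
  split_ifs with hx
  · exact (mem_pow_idealOfVars_iff' _ p).1 hp x (by omega)
  · rfl

theorem homogeneousComponent_mul_of_isHomogeneous {g : MvPolynomial σ R} (hg : g.IsHomogeneous n)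
    (r : MvPolynomial σ R) : homogeneousComponent n (r * g) = C (constantCoeff r) * g := by
  have hsplit : r * g = (r - C (constantCoeff r)) * g + C (constantCoeff r) * g := by ring
  rw [hsplit, map_add, homogeneousComponent_eq_zero_of_mem_pow_succ
    (sub_C_constantCoeff_mul_mem_pow_succ hg.mem_pow_idealOfVars r), zero_add,
    homogeneousComponent_C_mul, homogeneousComponent_eq_self hg]

theorem IsHomogeneous.mem_span_of_mem_sup {S : Set (MvPolynomial σ R)}
    (hS : ∀ g ∈ S, g.IsHomogeneous n) {p : MvPolynomial σ R} (hp : p.IsHomogeneous n)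
    (hmem : p ∈ idealOfVars σ R ^ (n + 1) ⊔ Ideal.span S) : p ∈ Submodule.span R S := by
  obtain ⟨q, hq, s, hs, rfl⟩ := Submodule.mem_sup.mp hmem
  rw [← homogeneousComponent_eq_self hp, map_add, homogeneousComponent_eq_zero_of_mem_pow_succ hq,
    zero_add]
  obtain ⟨c, hc, rfl⟩ := Submodule.mem_span_set.mp hs
  rw [Finsupp.sum, map_sum]
  refine Submodule.sum_mem _ fun g hg => ?_
  rw [smul_eq_mul, homogeneousComponent_mul_of_isHomogeneous (hS g (hc hg)), ← smul_eq_C_mul]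
  exact Submodule.smul_mem _ _ (Submodule.subset_span (hc hg))

theorem exists_sub_smul_mem_of_mem_sup_span_singleton {J : Ideal (MvPolynomial σ R)}
    (hJ : idealOfVars σ R ^ (n + 1) ≤ J) {v : MvPolynomial σ R} (hv : v.IsHomogeneous n)
    {p : MvPolynomial σ R} (hp : p ∈ J ⊔ Ideal.span {v}) : ∃ z : R, p - z • v ∈ J := by
  obtain ⟨q, hq, w, hw, rfl⟩ := Submodule.mem_sup.mp hp
  obtain ⟨r, rfl⟩ := Ideal.mem_span_singleton'.mp hw
  refine ⟨constantCoeff r, ?_⟩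
  have hsplit : q + r * v - constantCoeff r • v = q + (r - C (constantCoeff r)) * v := by
    rw [smul_eq_C_mul]
    ring
  rw [hsplit]
  exact J.add_mem hq (hJ (sub_C_constantCoeff_mul_mem_pow_succ hv.mem_pow_idealOfVars r))

end MvPolynomial

noncomputable section

namespace NextStepIdeal

variable {K : Type*} [Field K] (d n : ℕ)

theorem span_X_zero_X_one : Ideal.span {X 0, X 1} = idealOfVars (Fin 2) K := by
  rw [idealOfVars]
  congr 1
  ext p
  simp [Fin.exists_fin_two, eq_comm]

def xyExp (i : ℕ) : Fin 2 →₀ ℕ := Finsupp.single 0 (d - i) + Finsupp.single 1 i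

theorem xyExp_injective : Function.Injective (xyExp d) := fun i k h => by
  simpa [xyExp] using DFunLike.congr_fun h 1

theorem degree_xyExp {i : ℕ} (hi : i ≤ d) : (xyExp d i).degree = d := by
  simp only [xyExp, map_add, Finsupp.degree_single]
  omega

theorem C_mul_X_pow_mul_X_pow (r : K) (i : ℕ) :
    C r * X 0 ^ (d - i) * X 1 ^ i = monomial (xyExp d i) r := by
  rw [X_pow_eq_monomial, X_pow_eq_monomial, C_mul_monomial, monomial_mul, mul_one, mul_one, xyExp]

theorem X_pow_mul_X_pow (i : ℕ) : (X 0 ^ (d - i) * X 1 ^ i : MvPolynomial (Fin 2) K) =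
    monomial (xyExp d i) 1 := by
  rw [← C_mul_X_pow_mul_X_pow, C_1, one_mul]

theorem C_mul_X_pow_mul_X_pow_sub {j : ℕ} (hj : j ≤ d) (r : K) :
    C r * X 0 ^ j * X 1 ^ (d - j) = monomial (xyExp d (d - j)) r := by
  rw [← C_mul_X_pow_mul_X_pow, Nat.sub_sub_self hj]

-- `fPoly`, `gPoly`, `fIdeal`, `gIdeal` are the paper's `f_i`, `g_i`, `I`, `I'`, with `n = d - j`.
def fPoly (c : ℕ → ℕ → K) (i : ℕ) : MvPolynomial (Fin 2) K :=
  monomial (xyExp d i) 1 + ∑ i' ∈ Icc (n + 1) d, monomial (xyExp d i') (c i i')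

def gPoly (a : ℕ → K) (b : ℕ → ℕ → K) (i : ℕ) : MvPolynomial (Fin 2) K :=
  monomial (xyExp d i) 1 + monomial (xyExp d n) (a i) +
    ∑ i' ∈ Icc (n + 1) d, monomial (xyExp d i') (b i i')

def fIdeal (c : ℕ → ℕ → K) : Ideal (MvPolynomial (Fin 2) K) :=
  idealOfVars (Fin 2) K ^ (d + 1) ⊔ Ideal.span (fPoly d n c '' Set.Iic n)

def gIdeal (a : ℕ → K) (b : ℕ → ℕ → K) : Ideal (MvPolynomial (Fin 2) K) :=
  idealOfVars (Fin 2) K ^ (d + 1) ⊔ Ideal.span (gPoly d n a b '' Set.Iic (n - 1))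

variable {d n}

theorem coeff_fPoly_of_le (c : ℕ → ℕ → K) (i : ℕ) {k : ℕ} (hk : k ≤ n) :
    coeff (xyExp d k) (fPoly d n c i) = if k = i then 1 else 0 := by
  simp [fPoly, coeff_sum, coeff_monomial, (xyExp_injective d).eq_iff, eq_comm]
  omega

theorem coeff_gPoly_of_le (a : ℕ → K) (b : ℕ → ℕ → K) (i : ℕ) {k : ℕ} (hk : k ≤ n) :
    coeff (xyExp d k) (gPoly d n a b i) = (if k = i then 1 else 0) + if k = n then a i else 0 := by
  simp [gPoly, coeff_sum, coeff_monomial, (xyExp_injective d).eq_iff, eq_comm]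
  omega

theorem coeff_gPoly_of_mem_Icc (a : ℕ → K) (b : ℕ → ℕ → K) {i k : ℕ} (hi : i ≤ n)
    (hk : k ∈ Icc (n + 1) d) : coeff (xyExp d k) (gPoly d n a b i) = b i k := by
  obtain ⟨hnk, hkd⟩ := mem_Icc.mp hk
  simp [gPoly, coeff_sum, coeff_monomial, (xyExp_injective d).eq_iff, hkd, hnk,
    show i ≠ k by omega, show n ≠ k by omega]

theorem isHomogeneous_fPoly (c : ℕ → ℕ → K) {i : ℕ} (hi : i ≤ d) :
    (fPoly d n c i).IsHomogeneous d :=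
  (isHomogeneous_monomial _ (degree_xyExp d hi)).add <| IsHomogeneous.sum _ _ _ fun _ hi' =>
    isHomogeneous_monomial _ (degree_xyExp d (mem_Icc.mp hi').2)

theorem isHomogeneous_gPoly (hnd : n ≤ d) (a : ℕ → K) (b : ℕ → ℕ → K) {i : ℕ} (hi : i ≤ d) :
    (gPoly d n a b i).IsHomogeneous d :=
  ((isHomogeneous_monomial _ (degree_xyExp d hi)).add
    (isHomogeneous_monomial _ (degree_xyExp d hnd))).add <|
    IsHomogeneous.sum _ _ _ fun _ hi' =>
      isHomogeneous_monomial _ (degree_xyExp d (mem_Icc.mp hi').2)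

theorem gPoly_eq_fPoly_add_smul (a : ℕ → K) (c : ℕ → ℕ → K) (i : ℕ) :
    gPoly d n a (fun i i' => c i i' + a i * c n i') i = fPoly d n c i + a i • fPoly d n c n := by
  simp only [gPoly, fPoly, smul_add, smul_sum, smul_monomial, smul_eq_mul, mul_one, map_add,
    sum_add_distrib]
  abel

theorem fPoly_mem_fIdeal (c : ℕ → ℕ → K) {i : ℕ} (hi : i ≤ n) : fPoly d n c i ∈ fIdeal d n c :=
  Ideal.mem_sup_right (Ideal.subset_span ⟨i, hi, rfl⟩)

theorem gPoly_mem_gIdeal (a : ℕ → K) (b : ℕ → ℕ → K) {i : ℕ} (hi : i ≤ n - 1) :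
    gPoly d n a b i ∈ gIdeal d n a b :=
  Ideal.mem_sup_right (Ideal.subset_span ⟨i, hi, rfl⟩)

theorem gIdeal_le_fIdeal (a : ℕ → K) (c : ℕ → ℕ → K) :
    gIdeal d n a (fun i i' => c i i' + a i * c n i') ≤ fIdeal d n c := by
  refine sup_le le_sup_left (Ideal.span_le.mpr ?_)
  rintro _ ⟨i, hi, rfl⟩
  rw [SetLike.mem_coe, gPoly_eq_fPoly_add_smul]
  exact add_mem (fPoly_mem_fIdeal c (by have := Set.mem_Iic.mp hi; omega))
    (Submodule.smul_of_tower_mem _ _ (fPoly_mem_fIdeal c le_rfl))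

theorem fIdeal_le_gIdeal_sup_span (a : ℕ → K) (c : ℕ → ℕ → K) :
    fIdeal d n c ≤
      gIdeal d n a (fun i i' => c i i' + a i * c n i') ⊔ Ideal.span {fPoly d n c n} := by
  have hfn : fPoly d n c n ∈ gIdeal d n a (fun i i' => c i i' + a i * c n i') ⊔
      Ideal.span {fPoly d n c n} := Ideal.mem_sup_right (Ideal.mem_span_singleton_self _)
  refine sup_le (le_sup_of_le_left le_sup_left) (Ideal.span_le.mpr ?_)
  rintro _ ⟨i, hi, rfl⟩
  rcases le_or_gt i (n - 1) with hi' | hi'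
  · have hfi : fPoly d n c i = gPoly d n a (fun i i' => c i i' + a i * c n i') i -
        a i • fPoly d n c n := by
      rw [gPoly_eq_fPoly_add_smul, add_sub_cancel_right]
    rw [SetLike.mem_coe, hfi]
    exact sub_mem (Ideal.mem_sup_left (gPoly_mem_gIdeal _ _ hi'))
      (Submodule.smul_of_tower_mem _ _ hfn)
  · obtain rfl : i = n := by have := Set.mem_Iic.mp hi; omega
    exact hfn

theorem fPoly_notMem_gIdeal (hn : 1 ≤ n) (hnd : n ≤ d) (a : ℕ → K) (b c : ℕ → ℕ → K) :
    fPoly d n c n ∉ gIdeal d n a b := by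
  intro hmem
  have hspan := (isHomogeneous_fPoly c hnd).mem_span_of_mem_sup (by
    rintro _ ⟨i, hi, rfl⟩
    exact isHomogeneous_gPoly hnd a b (by have := Set.mem_Iic.mp hi; omega)) hmem
  rw [← Finset.coe_Iic] at hspan
  have hzero := eq_zero_of_mem_span_of_biorthogonal (φ := fun k => lcoeff K (xyExp d k)) ?_ hspan ?_
  · simpa [coeff_fPoly_of_le c n le_rfl] using congrArg (coeff (xyExp d n)) hzero
  · intro k hk m _
    have hkn : k < n := by have := mem_Iic.mp hk; omega
    rw [lcoeff_apply, coeff_gPoly_of_le a b m hkn.le, if_neg hkn.ne, add_zero]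
  · intro k hk
    have hkn : k < n := by have := mem_Iic.mp hk; omega
    rw [lcoeff_apply, coeff_fPoly_of_le c n hkn.le, if_neg hkn.ne]

theorem finrank_fIdeal_quotient_gIdeal (hn : 1 ≤ n) (hnd : n ≤ d) (a : ℕ → K) (c : ℕ → ℕ → K) :
    Module.finrank K (fIdeal d n c ⧸ Submodule.comap (fIdeal d n c).subtype
      (gIdeal d n a (fun i i' => c i i' + a i * c n i'))) = 1 :=
  finrank_quotient_comap_subtype_eq_one (fPoly_mem_fIdeal c le_rfl)
    (fPoly_notMem_gIdeal hn hnd _ _ c) fun _ hp =>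
      exists_sub_smul_mem_of_mem_sup_span_singleton le_sup_left (isHomogeneous_fPoly c hnd)
        (fIdeal_le_gIdeal_sup_span a c hp)

theorem eq_of_gIdeal_le_fIdeal (hnd : n ≤ d) {a : ℕ → K} {b c : ℕ → ℕ → K}
    (hle : gIdeal d n a b ≤ fIdeal d n c) {i : ℕ} (hi : i < n) {i' : ℕ}
    (hi' : i' ∈ Icc (n + 1) d) : b i i' = c i i' + a i * c n i' := by
  have hspan : ∀ b' : ℕ → ℕ → K, gIdeal d n a b' ≤ fIdeal d n c →
      gPoly d n a b' i ∈ Submodule.span K (fPoly d n c '' ↑(Iic n)) := fun b' hle' => by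
    rw [Finset.coe_Iic]
    refine (isHomogeneous_gPoly hnd a b' (by omega)).mem_span_of_mem_sup ?_
      (hle' (gPoly_mem_gIdeal a b' (by omega)))
    rintro _ ⟨k, hk, rfl⟩
    exact isHomogeneous_fPoly c (by have := Set.mem_Iic.mp hk; omega)
  have hzero := eq_zero_of_mem_span_of_biorthogonal (φ := fun k => lcoeff K (xyExp d k)) ?_
    (sub_mem (hspan b hle) (hspan _ (gIdeal_le_fIdeal a c))) ?_
  · simpa [coeff_gPoly_of_mem_Icc a _ hi.le hi', sub_eq_zero] using
      congrArg (coeff (xyExp d i')) hzero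
  · intro k hk m _
    exact coeff_fPoly_of_le c m (mem_Iic.mp hk)
  · intro k hk
    rw [map_sub, lcoeff_apply, lcoeff_apply, coeff_gPoly_of_le a b i (mem_Iic.mp hk),
      coeff_gPoly_of_le a _ i (mem_Iic.mp hk), sub_self]

end NextStepIdeal

end

open NextStepIdeal in
theorem unique_coefficients_of_next_step_ideal_general
    (d j : ℕ) (hd : 1 ≤ d) (hjd : j ≤ d - 1)
    (c : ℕ → ℕ → ℂ) :
    ∀ (m I : Ideal (MvPolynomial (Fin 2) ℂ)),
      m = Ideal.span {X 0, X 1} →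
      I = m ^ (d + 1) ⊔ Ideal.span
          ((fun i : ℕ => X 0 ^ (d - i) * X 1 ^ i +
              ∑ i' ∈ Finset.Icc (d - j + 1) d, C (c i i') * X 0 ^ (d - i') * X 1 ^ i') ''
            Set.Iic (d - j)) →
      ∀ a : ℕ → ℂ,
        let I' : (ℕ → ℕ → ℂ) → Ideal (MvPolynomial (Fin 2) ℂ) := fun b =>
          m ^ (d + 1) ⊔ Ideal.span
            ((fun i : ℕ => X 0 ^ (d - i) * X 1 ^ i + C (a i) * X 0 ^ j * X 1 ^ (d - j) +
                ∑ i' ∈ Finset.Icc (d - j + 1) d, C (b i i') * X 0 ^ (d - i') * X 1 ^ i') ''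
              Set.Iic (d - j - 1))
        let b₀ : ℕ → ℕ → ℂ := fun i i' => c i i' + a i * c (d - j) i'
        I' b₀ ≤ I ∧
        Module.finrank ℂ (↥I ⧸ Submodule.comap I.subtype (I' b₀)) = 1 ∧
        ∀ b : ℕ → ℕ → ℂ, I' b ≤ I →
          ∀ i ≤ d - j - 1, ∀ i' ∈ Finset.Icc (d - j + 1) d,
            b i i' = c i i' + a i * c (d - j) i' := by
  intro m I hm hI a I' b₀
  have hn : 1 ≤ d - j := by omega
  have hnd : d - j ≤ d := Nat.sub_le d j
  have hI_eq : I = fIdeal d (d - j) c := by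
    rw [hI, hm]
    simp only [span_X_zero_X_one, X_pow_mul_X_pow, C_mul_X_pow_mul_X_pow]
    rfl
  have hI'_eq : ∀ b, I' b = gIdeal d (d - j) a b := fun b => by
    simp only [I', hm, span_X_zero_X_one, X_pow_mul_X_pow, C_mul_X_pow_mul_X_pow,
      C_mul_X_pow_mul_X_pow_sub d (show j ≤ d by omega)]
    rfl
  rw [hI_eq, hI'_eq]
  refine ⟨gIdeal_le_fIdeal a c, finrank_fIdeal_quotient_gIdeal hn hnd a c,
    fun b hb i hi i' hi' => eq_of_gIdeal_le_fIdeal hnd ((hI'_eq b).symm.trans_le hb) (by omega) hi'⟩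

/-- In `R = ℂ[x,y]` with `m = (x,y)`, fix `d ≥ 1`, `1 ≤ j ≤ d-1`,
coefficients `c i i'`, and let `I` be the ideal generated by `m^(d+1)` and the polynomials
`f i = x^(d-i) y^i + ∑_{i'=d-j+1}^{d} c i i' x^(d-i') y^(i')` for `0 ≤ i ≤ d-j`.
Then for every choice `a_0, …, a_(d-j-1)` of complex numbers there exist unique complex
numbers `b i i'` (for `0 ≤ i ≤ d-j-1`, `d-j+1 ≤ i' ≤ d`), namely
`b i i' = c i i' + a i * c (d-j) i'`, such that the ideal `I'` generated by `m^(d+1)` and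
`g i = x^(d-i) y^i + a i • x^j y^(d-j) + ∑_{i'} b i i' • x^(d-i') y^(i')` for
`0 ≤ i ≤ d-j-1` is contained in `I`; moreover `dim_ℂ (I/I') = 1`. -/
theorem unique_coefficients_of_next_step_ideal
    (d j : ℕ) (hd : 1 ≤ d) (hj : 1 ≤ j) (hjd : j ≤ d - 1)
    (c : ℕ → ℕ → ℂ) :
    ∀ (m I : Ideal (MvPolynomial (Fin 2) ℂ)),
      m = Ideal.span {X 0, X 1} →
      I = m ^ (d + 1) ⊔ Ideal.span
          ((fun i : ℕ => X 0 ^ (d - i) * X 1 ^ i +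
              ∑ i' ∈ Finset.Icc (d - j + 1) d, C (c i i') * X 0 ^ (d - i') * X 1 ^ i') ''
            Set.Iic (d - j)) →
      ∀ a : ℕ → ℂ,
        let I' : (ℕ → ℕ → ℂ) → Ideal (MvPolynomial (Fin 2) ℂ) := fun b =>
          m ^ (d + 1) ⊔ Ideal.span
            ((fun i : ℕ => X 0 ^ (d - i) * X 1 ^ i + C (a i) * X 0 ^ j * X 1 ^ (d - j) +
                ∑ i' ∈ Finset.Icc (d - j + 1) d, C (b i i') * X 0 ^ (d - i') * X 1 ^ i') ''
              Set.Iic (d - j - 1))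
        let b₀ : ℕ → ℕ → ℂ := fun i i' => c i i' + a i * c (d - j) i'
        I' b₀ ≤ I ∧
        Module.finrank ℂ (↥I ⧸ Submodule.comap I.subtype (I' b₀)) = 1 ∧
        ∀ b : ℕ → ℕ → ℂ, I' b ≤ I →
          ∀ i ≤ d - j - 1, ∀ i' ∈ Finset.Icc (d - j + 1) d,
            b i i' = c i i' + a i * c (d - j) i' :=
  unique_coefficients_of_next_step_ideal_general d j hd hjd c
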